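/- For every integer k ≥ 2, the edge-coloring f of the prism C_{2k} □ C_2 defined by: f({i0, i1}) = k for all i; f({ij, (i+1)j}) = i for 0 ≤ i ≤ k−1; f({ij, (i+1)j}) = i − k for k ≤ i ≤ 2k−2; and f({(2k−1)j, 0j}) = k−1 (j ∈ {0,1}), is a strong rainbow coloring using k+1 colors. -/

import Mathlib

open SimpleGraph Finset

/-- A coloring `c` of (potential) edges is a rainbow coloring of `G` if every pair of
distinct vertices is joined by a path whose edges have pairwise distinct colors. -/
def SimpleGraph.IsRainbowColoring {V α : Type*} (G : SimpleGraph V) (c : Sym2 V → α) : Prop :=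
  ∀ u v : V, u ≠ v → ∃ p : G.Walk u v, p.IsPath ∧ (p.edges.map c).Nodup

/-- A strong rainbow coloring: every pair of distinct vertices is joined by a rainbow
path whose length equals the distance between them. -/
def SimpleGraph.IsStrongRainbowColoring {V α : Type*} (G : SimpleGraph V) (c : Sym2 V → α) : Prop :=
  ∀ u v : V, u ≠ v → ∃ p : G.Walk u v, p.IsPath ∧ p.length = G.dist u v ∧ (p.edges.map c).Nodup

/-- The rainbow connection number: least number of colors of a rainbow coloring. -/
noncomputable def SimpleGraph.rc {V : Type*} (G : SimpleGraph V) : ℕ :=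
  sInf {k : ℕ | ∃ c : Sym2 V → Fin k, G.IsRainbowColoring c}

/-- The strong rainbow connection number: least number of colors of a strong rainbow coloring. -/
noncomputable def SimpleGraph.src {V : Type*} (G : SimpleGraph V) : ℕ :=
  sInf {k : ℕ | ∃ c : Sym2 V → Fin k, G.IsStrongRainbowColoring c}

/-- The toroidal mesh `C_{n 0} □ ⋯ □ C_{n (r-1)}`: the Cartesian (box) product of the
cycles `cycleGraph (n i)`. -/
def toroidalMesh {r : ℕ} (n : Fin r → ℕ) : SimpleGraph (∀ i, Fin (n i)) :=
  SimpleGraph.fromRel fun u v =>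
    ∃ i, (cycleGraph (n i)).Adj (u i) (v i) ∧ ∀ j, j ≠ i → u j = v j

/-!
Write `n = 2k`. Distances in the prism add up over the two factors, and the distance from `x`
to `y` in `C_n` is `min ((y - x) mod n) ((x - y) mod n)`: it is attained by walking in one
direction, and it cannot be beaten because `z ↦ min ((y - z) mod n) ((z - y) mod n)` changes by
at most one along an edge. Of `(y - x) mod n` and `(x - y) mod n` one is at most `k`, say
`d = (y - x) mod n`. A geodesic from `(x, a)` to `(y, b)` then takes the rung at `x` if
`a ≠ b` (color `k`) and walks `x, x + 1, …, y` along the row `b`. The edge `{x + t, x + t + 1}`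
has color `(x + t) mod k`, so the row colors are `d ≤ k` consecutive residues mod `k`, hence
distinct.
-/

namespace Fin

variable {n : ℕ} [NeZero n]

lemma val_neg_eq_ite (a : Fin n) : (-a).val = if a.val = 0 then 0 else n - a.val := by
  rw [val_neg]
  simp only [Fin.ext_iff, val_zero]

lemma min_val_add_one_val_neg_le (a : Fin n) :
    min (a + 1).val (-(a + 1)).val ≤ min a.val (-a).val + 1 := by
  obtain ⟨m, rfl⟩ := Nat.exists_eq_succ_of_ne_zero (NeZero.ne n)
  have h_add : (a + 1).val = if a.val = m then 0 else a.val + 1 := by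
    simp [val_add_one, Fin.ext_iff]
  rw [val_neg_eq_ite, val_neg_eq_ite, h_add]
  have := a.isLt
  split_ifs <;> omega

end Fin

lemma List.nodup_map_add_mod_range (x : ℕ) {d k : ℕ} (hd : d ≤ k) :
    ((List.range d).map fun t => (x + t) % k).Nodup := by
  refine List.Nodup.map_on (fun s hs t ht hst => ?_) List.nodup_range
  rw [List.mem_range] at hs ht
  have : s % k = t % k := Nat.ModEq.add_left_cancel' x hst
  rwa [Nat.mod_eq_of_lt (by omega), Nat.mod_eq_of_lt (by omega)] at this

namespace SimpleGraph

variable {V W : Type*} {G : SimpleGraph V} {H : SimpleGraph W}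

namespace Walk

def ofSeq (f : ℕ → V) (hf : ∀ t, G.Adj (f t) (f (t + 1))) : (d : ℕ) → G.Walk (f 0) (f d)
  | 0 => nil
  | d + 1 => (ofSeq f hf d).concat (hf d)

section ofSeq

variable {f : ℕ → V} {hf : ∀ t, G.Adj (f t) (f (t + 1))}

@[simp]
lemma length_ofSeq (d : ℕ) : (ofSeq f hf d).length = d := by
  induction d with
  | zero => rfl
  | succ d ih => rw [ofSeq, length_concat, ih]

lemma support_ofSeq (d : ℕ) : (ofSeq f hf d).support = (List.range (d + 1)).map f := by
  induction d with
  | zero => rfl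
  | succ d ih =>
    rw [ofSeq, support_concat, ih, List.range_succ (n := d + 1), List.map_append,
      List.map_singleton]

lemma edges_ofSeq (d : ℕ) :
    (ofSeq f hf d).edges = (List.range d).map fun t => s(f t, f (t + 1)) := by
  induction d with
  | zero => rfl
  | succ d ih =>
    rw [ofSeq, edges_concat, ih, List.range_succ, List.map_append, List.concat_eq_append,
      List.map_singleton]

lemma isPath_ofSeq {d : ℕ} (hinj : Set.InjOn f (Set.Iic d)) : (ofSeq f hf d).IsPath := by
  rw [isPath_def, support_ofSeq]
  refine List.Nodup.map_on (fun s hs t ht hst => hinj ?_ ?_ hst) List.nodup_range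
  · simpa [Nat.lt_succ_iff] using hs
  · simpa [Nat.lt_succ_iff] using ht

end ofSeq

lemma le_add_length {w : V → ℕ} (hw : ∀ u v, G.Adj u v → w u ≤ w v + 1) :
    ∀ {u v : V} (p : G.Walk u v), w u ≤ w v + p.length
  | _, _, nil => le_rfl
  | _, _, cons h p => by
    have := hw _ _ h
    have := le_add_length hw p
    rw [length_cons]
    omega

section boxProdLeft

variable {a₁ a₂ : V} (b : W) (p : G.Walk a₁ a₂)

@[simp]
lemma length_boxProdLeft : (p.boxProdLeft H b).length = p.length :=
  p.length_map _

lemma support_boxProdLeft : (p.boxProdLeft H b).support = p.support.map (·, b) :=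
  p.support_map _

lemma edges_boxProdLeft : (p.boxProdLeft H b).edges = p.edges.map (Sym2.map (·, b)) :=
  p.edges_map _

lemma IsPath.boxProdLeft {p : G.Walk a₁ a₂} (hp : p.IsPath) : (p.boxProdLeft H b).IsPath :=
  hp.map (G.boxProdLeft H b).injective

end boxProdLeft

end Walk

lemma Reachable.le_add_dist {w : V → ℕ} (hw : ∀ u v, G.Adj u v → w u ≤ w v + 1) {u v : V}
    (h : G.Reachable u v) : w u ≤ w v + G.dist u v := by
  obtain ⟨p, hp⟩ := h.exists_walk_length_eq_dist
  exact hp ▸ p.le_add_length hw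

lemma dist_boxProd {x y : V × W} (hG : G.Reachable x.1 y.1) (hH : H.Reachable x.2 y.2) :
    (G □ H).dist x y = G.dist x.1 y.1 + H.dist x.2 y.2 := by
  rw [dist, edist_boxProd, ENat.toNat_add (edist_ne_top_iff_reachable.mpr hG)
    (edist_ne_top_iff_reachable.mpr hH), dist, dist]

section cycleGraph

open Fin.NatCast

variable {n : ℕ} [NeZero n]

lemma cycleGraph_adj_add_one (hn : 2 ≤ n) (x : Fin n) : (cycleGraph n).Adj x (x + 1) := by
  rw [cycleGraph_adj', add_sub_cancel_left, Fin.val_one', Nat.mod_eq_of_lt hn]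
  exact Or.inr rfl

lemma cycleGraph_adj_add_natCast_succ (hn : 2 ≤ n) (x : Fin n) (t : ℕ) :
    (cycleGraph n).Adj (x + (t : Fin n)) (x + ((t + 1 : ℕ) : Fin n)) := by
  rw [Nat.cast_succ, ← add_assoc]
  exact cycleGraph_adj_add_one hn _

lemma eq_add_one_or_eq_add_one_of_cycleGraph_adj (hn : 2 ≤ n) {z w : Fin n}
    (h : (cycleGraph n).Adj z w) : w = z + 1 ∨ z = w + 1 := by
  have h_one : ((1 : Fin n) : ℕ) = 1 := by rw [Fin.val_one', Nat.mod_eq_of_lt hn]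
  rcases cycleGraph_adj'.mp h with h | h
  · exact Or.inr (sub_eq_iff_eq_add'.mp (Fin.ext (h.trans h_one.symm)))
  · exact Or.inl (sub_eq_iff_eq_add'.mp (Fin.ext (h.trans h_one.symm)))

def cycleGraph.forwardWalk (hn : 2 ≤ n) (x y : Fin n) : (cycleGraph n).Walk x y :=
  (Walk.ofSeq (fun t : ℕ => x + (t : Fin n)) (cycleGraph_adj_add_natCast_succ hn x)
    (y - x).val).copy (by simp) (by simp)

namespace cycleGraph

variable (hn : 2 ≤ n) (x y : Fin n)

@[simp]
lemma length_forwardWalk : (forwardWalk hn x y).length = (y - x).val := by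
  simp [forwardWalk]

lemma edges_forwardWalk :
    (forwardWalk hn x y).edges =
      (List.range (y - x).val).map fun t : ℕ => s(x + (t : Fin n), x + ((t + 1 : ℕ) : Fin n)) := by
  rw [forwardWalk, Walk.edges_copy, Walk.edges_ofSeq]

lemma isPath_forwardWalk : (forwardWalk hn x y).IsPath := by
  rw [forwardWalk, Walk.isPath_copy]
  refine Walk.isPath_ofSeq fun s hs t ht hst => ?_
  rw [Set.mem_Iic] at hs ht
  have := (y - x).isLt
  have hst := congrArg Fin.val (add_left_cancel hst)
  rwa [Fin.val_natCast, Fin.val_natCast, Nat.mod_eq_of_lt (by omega),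
    Nat.mod_eq_of_lt (by omega)] at hst

end cycleGraph

lemma cycleGraph_dist (hn : 2 ≤ n) (x y : Fin n) :
    (cycleGraph n).dist x y = min (y - x).val (x - y).val := by
  set ρ : Fin n → ℕ := fun z => min (y - z).val (z - y).val
  have hρ : ∀ z w, (cycleGraph n).Adj z w → ρ z ≤ ρ w + 1 := by
    intro z w hzw
    rcases eq_add_one_or_eq_add_one_of_cycleGraph_adj hn hzw with rfl | rfl
    · have := Fin.min_val_add_one_val_neg_le (y - (z + 1))
      rwa [show y - (z + 1) + 1 = y - z by abel, show -(y - z) = z - y by abel,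
        show -(y - (z + 1)) = z + 1 - y by abel] at this
    · have := Fin.min_val_add_one_val_neg_le (w - y)
      rwa [show w - y + 1 = w + 1 - y by abel, show -(w + 1 - y) = y - (w + 1) by abel,
        show -(w - y) = y - w by abel, min_comm (w + 1 - y).val, min_comm (w - y).val] at this
  refine le_antisymm ?_ ?_
  · rcases min_cases (y - x).val (x - y).val with ⟨h, -⟩ | ⟨h, -⟩ <;> rw [h]
    · simpa using dist_le (cycleGraph.forwardWalk hn x y)
    · simpa [dist_comm] using dist_le (cycleGraph.forwardWalk hn y x)
  · simpa [ρ] using (cycleGraph_preconnected x y).le_add_dist hρ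

end cycleGraph

end SimpleGraph

section prism

open Fin.NatCast

variable {k : ℕ}

def prismColoring (k : ℕ) (u v : Fin (2 * k) × Fin 2) : ℕ :=
  if u.1 = v.1 then k
  else if ((u.1 : ℕ) + 1) % (2 * k) = (v.1 : ℕ) then (u.1 : ℕ) % k
  else if ((v.1 : ℕ) + 1) % (2 * k) = (u.1 : ℕ) then (v.1 : ℕ) % k
  else 0

lemma prismColoring_rung (x : Fin (2 * k)) (a b : Fin 2) : prismColoring k (x, a) (x, b) = k :=
  if_pos rfl

lemma prismColoring_comm (hk : 2 ≤ k) (u v : Fin (2 * k) × Fin 2) :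
    prismColoring k u v = prismColoring k v u := by
  have h_succ (x : Fin (2 * k)) :
      ((x : ℕ) + 1) % (2 * k) = if (x : ℕ) + 1 = 2 * k then 0 else (x : ℕ) + 1 := by
    split_ifs with h
    · rw [h, Nat.mod_self]
    · exact Nat.mod_eq_of_lt (by omega)
  have := u.1.isLt
  have := v.1.isLt
  unfold prismColoring
  rw [h_succ u.1, h_succ v.1]
  simp only [Fin.ext_iff]
  split_ifs <;> omega

variable [NeZero k]

lemma prismColoring_lt (u v : Fin (2 * k) × Fin 2) : prismColoring k u v < k + 1 := by
  have := Nat.mod_lt (u.1 : ℕ) (NeZero.pos k)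
  have := Nat.mod_lt (v.1 : ℕ) (NeZero.pos k)
  unfold prismColoring
  split_ifs <;> omega

lemma prismColoring_add_one (x : Fin (2 * k)) (a b : Fin 2) :
    prismColoring k (x, a) (x + 1, b) = (x : ℕ) % k := by
  have h_one : ((1 : Fin (2 * k)) : ℕ) = 1 := by
    rw [Fin.val_one', Nat.mod_eq_of_lt (Nat.le_mul_of_pos_right 2 (NeZero.pos k))]
  have h_ne : x ≠ x + 1 := fun h => by
    simpa [h_one] using congrArg Fin.val (left_eq_add.mp h)
  rw [prismColoring, if_neg h_ne, if_pos (by rw [Fin.val_add, h_one])]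

lemma val_sub_le_or_val_sub_le (x y : Fin (2 * k)) : (y - x).val ≤ k ∨ (x - y).val ≤ k := by
  rw [← neg_sub, Fin.val_neg_eq_ite]
  split_ifs <;> omega

lemma prism_dist_of_val_sub_le {x y : Fin (2 * k)} (hxy : (y - x).val ≤ k) (a b : Fin 2) :
    (cycleGraph (2 * k) □ cycleGraph 2).dist (x, a) (y, b) =
      (y - x).val + if a = b then 0 else 1 := by
  have hn : 2 ≤ 2 * k := Nat.le_mul_of_pos_right 2 (NeZero.pos k)
  rw [dist_boxProd (cycleGraph_preconnected _ _) (cycleGraph_preconnected _ _)]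
  dsimp only
  rw [cycleGraph_dist hn, cycleGraph_two_eq_top, dist_top, ← neg_sub y x, Fin.val_neg_eq_ite]
  congr 1
  split_ifs <;> omega

variable {c : Sym2 (Fin (2 * k) × Fin 2) → ℕ} (hc : ∀ u v, c s(u, v) = prismColoring k u v)
include hc

lemma map_edges_forwardWalk_boxProdLeft (hn : 2 ≤ 2 * k) (x y : Fin (2 * k)) (b : Fin 2) :
    ((cycleGraph.forwardWalk hn x y).boxProdLeft (cycleGraph 2) b).edges.map c =
      (List.range (y - x).val).map fun t => ((x : ℕ) + t) % k := by
  rw [Walk.edges_boxProdLeft, cycleGraph.edges_forwardWalk, List.map_map, List.map_map]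
  refine List.map_congr_left fun t _ => ?_
  rw [Function.comp_apply, Function.comp_apply, Sym2.map_mk, Nat.cast_succ, ← add_assoc, hc,
    prismColoring_add_one, Fin.val_add, Fin.val_natCast, Nat.add_mod_mod,
    Nat.mod_mod_of_dvd _ (dvd_mul_left k 2)]

lemma exists_rainbow_geodesic {u v : Fin (2 * k) × Fin 2} (huv : (v.1 - u.1).val ≤ k) :
    ∃ p : (cycleGraph (2 * k) □ cycleGraph 2).Walk u v,
      p.IsPath ∧ p.length = (cycleGraph (2 * k) □ cycleGraph 2).dist u v ∧
        (p.edges.map c).Nodup := by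
  obtain ⟨x, a⟩ := u
  obtain ⟨y, b⟩ := v
  have hn : 2 ≤ 2 * k := Nat.le_mul_of_pos_right 2 (NeZero.pos k)
  set q := (cycleGraph.forwardWalk hn x y).boxProdLeft (cycleGraph 2) b
  have hq_path : q.IsPath := (cycleGraph.isPath_forwardWalk hn x y).boxProdLeft b
  have hq_colors : q.edges.map c = (List.range (y - x).val).map fun t => ((x : ℕ) + t) % k :=
    map_edges_forwardWalk_boxProdLeft hc hn x y b
  have hq_rainbow : (q.edges.map c).Nodup := hq_colors ▸ List.nodup_map_add_mod_range _ huv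
  rw [prism_dist_of_val_sub_le huv]
  rcases eq_or_ne a b with rfl | hab
  · exact ⟨q, hq_path, by simp [q], hq_rainbow⟩
  have h_rung : (cycleGraph (2 * k) □ cycleGraph 2).Adj (x, a) (x, b) :=
    boxProd_adj_right.mpr (by rwa [cycleGraph_two_eq_top])
  refine ⟨.cons h_rung q, ?_, by simp [q, hab], ?_⟩
  · refine (Walk.cons_isPath_iff _ _).mpr ⟨hq_path, fun h => hab ?_⟩
    rw [Walk.support_boxProdLeft] at h
    obtain ⟨z, -, hz⟩ := List.mem_map.mp h
    exact (Prod.ext_iff.mp hz).2.symm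
  · rw [Walk.edges_cons, List.map_cons, hc, prismColoring_rung, List.nodup_cons]
    refine ⟨fun h => ?_, hq_rainbow⟩
    rw [hq_colors] at h
    obtain ⟨t, -, ht⟩ := List.mem_map.mp h
    exact (Nat.mod_lt _ (NeZero.pos k)).ne ht

end prism

theorem stmt_13 (k : ℕ) (hk : 2 ≤ k) :
    ∃ c : Sym2 (Fin (2 * k) × Fin 2) → ℕ,
      (∀ u v : Fin (2 * k) × Fin 2,
        c s(u, v) =
          if u.1 = v.1 then k
          else if ((u.1 : ℕ) + 1) % (2 * k) = (v.1 : ℕ) then (u.1 : ℕ) % k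
          else if ((v.1 : ℕ) + 1) % (2 * k) = (u.1 : ℕ) then (v.1 : ℕ) % k
          else 0) ∧
      (∀ e : Sym2 (Fin (2 * k) × Fin 2), c e < k + 1) ∧
      (cycleGraph (2 * k) □ cycleGraph 2).IsStrongRainbowColoring c := by
  have : NeZero k := ⟨by omega⟩
  let c : Sym2 (Fin (2 * k) × Fin 2) → ℕ := Sym2.lift ⟨prismColoring k, prismColoring_comm hk⟩
  have hc : ∀ u v, c s(u, v) = prismColoring k u v := fun _ _ => rfl
  refine ⟨c, hc, fun e => e.ind prismColoring_lt, fun u v _ => ?_⟩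
  rcases val_sub_le_or_val_sub_le u.1 v.1 with h | h
  · exact exists_rainbow_geodesic hc h
  · obtain ⟨p, hp, hlen, hrainbow⟩ := exists_rainbow_geodesic hc h
    refine ⟨p.reverse, hp.reverse, by rw [Walk.length_reverse, hlen, dist_comm], ?_⟩
    rwa [Walk.edges_reverse, List.map_reverse, List.nodup_reverse]
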